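/- Let P be a probability measure on Ω₁ × Ω₂ with first marginal P₁. Then for every open U ⊆ Ω₁ × Ω₂ with P(U) ≤ 2^{-2n} there is an open V ⊆ Ω₁ with P₁(V) ≤ 2^{-n} (the union of n-heavy cylinders) such that for all α₁ ∉ V for which the conditional measure P(·|α₁) exists as a cylinder-limit, P(U_{α₁} | α₁) ≤ 2^{-n}, where U_{α₁} = {ω' : (α₁,ω') ∈ U}. -/

import Mathlib

open MeasureTheory Set Filter Topology

abbrev Cantor : Type := ℕ → Bool

def cyl (a : List Bool) : Set Cantor := {ω | ∀ i : Fin a.length, ω i = a.get i}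

def pref (ω : Cantor) (n : ℕ) : List Bool := List.ofFn fun i : Fin n => ω i

lemma pref_length (ω : Cantor) (m : ℕ) : (pref ω m).length = m := by simp [pref]

lemma mem_cyl {ω : Cantor} {a : List Bool} :
    ω ∈ cyl a ↔ ∀ i (h : i < a.length), ω i = a[i] :=
  ⟨fun h i hi => h ⟨i, hi⟩, fun h i => h i i.2⟩

lemma mem_cyl_pref (ω : Cantor) (m : ℕ) : ω ∈ cyl (pref ω m) := by
  rw [mem_cyl]; intro i hi; simp [pref]

lemma mem_cyl_iff_pref {ω : Cantor} {a : List Bool} : ω ∈ cyl a ↔ pref ω a.length = a := by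
  constructor
  · intro h
    apply List.ext_getElem (by simp [pref])
    intro i h1 h2
    have := (mem_cyl.1 h) i h2
    simp [pref, this]
  · intro h
    rw [mem_cyl]
    intro i hi
    have := List.getElem_of_eq h.symm hi
    rw [this]
    simp [pref]

lemma pref_prefix (ω : Cantor) {m m' : ℕ} (h : m ≤ m') : pref ω m <+: pref ω m' := by
  rw [List.prefix_iff_eq_take]
  apply List.ext_getElem (by simp [pref, h])
  intro i h1 h2
  simp [pref, List.getElem_take]

lemma cyl_mono {a b : List Bool} (h : b <+: a) : cyl a ⊆ cyl b := by
  intro ω hω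
  rw [mem_cyl] at *
  intro i hi
  have hi' : i < a.length := lt_of_lt_of_le hi h.length_le
  rw [hω i hi']
  exact (h.getElem hi).symm

lemma cyl_pref_mono (ω : Cantor) {m m' : ℕ} (h : m ≤ m') :
    cyl (pref ω m') ⊆ cyl (pref ω m) := cyl_mono (pref_prefix ω h)

lemma eq_of_mem_cyl_pref {g f : Cantor} {m : ℕ} (h : g ∈ cyl (pref f m)) {i : ℕ}
    (hi : i < m) : g i = f i := by
  have := mem_cyl.1 h i (by simpa [pref] using hi)
  simpa only [pref, List.getElem_ofFn] using this

lemma isOpen_cyl (a : List Bool) : IsOpen (cyl a) := by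
  have : cyl a = ⋂ i : Fin a.length, (fun ω : Cantor => ω (i : ℕ)) ⁻¹' {a.get i} := by
    ext ω; simp [cyl, Set.mem_iInter]
  rw [this]
  exact isOpen_iInter_of_finite fun i =>
    (continuous_apply (i : ℕ)).isOpen_preimage _ (isOpen_discrete _)

lemma measurableSet_cyl (a : List Bool) : MeasurableSet (cyl a) := by
  have : cyl a = ⋂ i : Fin a.length, (fun ω : Cantor => ω (i : ℕ)) ⁻¹' {a.get i} := by
    ext ω; simp [cyl, Set.mem_iInter]
  rw [this]
  exact MeasurableSet.iInter fun i => measurable_pi_apply (i : ℕ) (measurableSet_singleton _)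

lemma prefix_or_of_mem {a b : List Bool} {ω : Cantor} (ha : ω ∈ cyl a) (hb : ω ∈ cyl b) :
    a <+: b ∨ b <+: a := by
  rcases le_total a.length b.length with h | h
  · left
    rw [← mem_cyl_iff_pref.1 ha, ← mem_cyl_iff_pref.1 hb]
    exact pref_prefix ω h
  · right
    rw [← mem_cyl_iff_pref.1 ha, ← mem_cyl_iff_pref.1 hb]
    exact pref_prefix ω h

lemma exists_nhds_cyl {f : Cantor} {A : Set Cantor} (h : A ∈ 𝓝 f) :
    ∃ m, cyl (pref f m) ⊆ A := by
  rw [nhds_pi, Filter.mem_pi] at h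
  obtain ⟨I, hI, s, hs, hsub⟩ := h
  obtain ⟨m, hm⟩ := hI.bddAbove
  refine ⟨m + 1, fun g hg => hsub ?_⟩
  intro i hi
  rw [eq_of_mem_cyl_pref hg (Nat.lt_succ_of_le (hm hi))]
  exact mem_of_mem_nhds (hs i)

lemma exists_minimal_prefix (S : Set (List Bool)) (a : List Bool) (ha : a ∈ S) :
    ∃ b ∈ S, b <+: a ∧ ∀ c ∈ S, c <+: b → c = b := by
  suffices H : ∀ n (a : List Bool), a.length = n → a ∈ S →
      ∃ b ∈ S, b <+: a ∧ ∀ c ∈ S, c <+: b → c = b from H a.length a rfl ha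
  intro n
  induction n using Nat.strong_induction_on with
  | _ n ih =>
    intro a hn ha
    by_cases h : ∀ c ∈ S, c <+: a → c = a
    · exact ⟨a, ha, List.prefix_refl a, h⟩
    · push_neg at h
      obtain ⟨c, hcS, hca, hne⟩ := h
      have hlt : c.length < n :=
        hn ▸ lt_of_le_of_ne hca.length_le fun e => hne (hca.eq_of_length e)
      obtain ⟨b, hbS, hbc, hmin⟩ := ih c.length hlt c rfl hcS
      exact ⟨b, hbS, hbc.trans hca, hmin⟩

lemma pow_cancel (n : ℕ) (x : ENNReal) : (2:ENNReal) ^ n * ((2:ENNReal)⁻¹ ^ n * x) = x := by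
  rw [← mul_assoc, ← mul_pow, ENNReal.mul_inv_cancel (by norm_num) (by norm_num), one_pow,
    one_mul]

/-- Combination of the heavy-intervals and section lemmas: for every open `U`
with `P(U) ≤ 2^{-2n}` there is an open `V ⊆ Ω₁` with `P₁(V) ≤ 2^{-n}` such that
every `α₁ ∉ V` whose conditional measure exists as a cylinder-limit gives
conditional measure at most `2^{-n}` to the `α₁`-section of `U`. -/
theorem stmt_15 (P : Measure (Cantor × Cantor)) [IsProbabilityMeasure P]
    (P1 : Measure Cantor) (hP1 : P1 = P.map Prod.fst)
    (n : ℕ) (U : Set (Cantor × Cantor)) (hUopen : IsOpen U)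
    (hsmall : P U ≤ 2⁻¹ ^ (2 * n)) :
    ∃ V : Set Cantor, IsOpen V ∧ P1 V ≤ 2⁻¹ ^ n ∧
      ∀ α1 : Cantor, α1 ∉ V →
        ∀ Q : Measure Cantor, IsProbabilityMeasure Q →
          (∀ m : ℕ, 0 < P1 (cyl (pref α1 m))) →
          (∀ J : List Bool,
            Tendsto (fun m : ℕ =>
                (P (cyl (pref α1 m) ×ˢ cyl J)).toReal /
                  (P1 (cyl (pref α1 m))).toReal)
              atTop (𝓝 (Q (cyl J)).toReal)) →
          Q {β : Cantor | (α1, β) ∈ U} ≤ 2⁻¹ ^ n := by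
  classical
  haveI hP1prob : IsProbabilityMeasure P1 := by
    rw [hP1]; exact Measure.isProbabilityMeasure_map measurable_fst.aemeasurable
  set H : Set (List Bool) :=
    {a | 2⁻¹ ^ n * P1 (cyl a) < P (U ∩ (cyl a ×ˢ (univ : Set Cantor)))} with hH
  set Hm : Set (List Bool) := {a ∈ H | ∀ c ∈ H, c <+: a → c = a} with hHm
  have hHmd : Hm.PairwiseDisjoint cyl := by
    intro a haa b hbb hab
    rw [Function.onFun, Set.disjoint_left]
    intro ω hωa hωb
    rcases prefix_or_of_mem hωa hωb with h | h
    · exact hab (hbb.2 a haa.1 h)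
    · exact hab (haa.2 b hbb.1 h).symm
  have hcount : Hm.Countable := Set.to_countable Hm
  refine ⟨⋃ a ∈ Hm, cyl a, isOpen_biUnion fun a _ => isOpen_cyl a, ?_, ?_⟩
  · -- measure bound on V
    have key : ∀ a ∈ Hm, P1 (cyl a) ≤ 2 ^ n * P (U ∩ (cyl a ×ˢ (univ : Set Cantor))) := by
      intro a ha
      calc P1 (cyl a) = 2 ^ n * (2⁻¹ ^ n * P1 (cyl a)) := (pow_cancel n _).symm
        _ ≤ 2 ^ n * P (U ∩ (cyl a ×ˢ (univ : Set Cantor))) := by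
            gcongr
            exact le_of_lt ha.1
    calc P1 (⋃ a ∈ Hm, cyl a) ≤ ∑' a : Hm, P1 (cyl (a : List Bool)) :=
          measure_biUnion_le P1 hcount cyl
      _ ≤ ∑' a : Hm, 2 ^ n * P (U ∩ (cyl (a : List Bool) ×ˢ (univ : Set Cantor))) :=
          ENNReal.tsum_le_tsum fun a => key a a.2
      _ = 2 ^ n * ∑' a : Hm, P (U ∩ (cyl (a : List Bool) ×ˢ (univ : Set Cantor))) :=
          ENNReal.tsum_mul_left
      _ = 2 ^ n * P (⋃ a ∈ Hm, U ∩ (cyl a ×ˢ (univ : Set Cantor))) := by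
          rw [measure_biUnion hcount ?_ fun a _ =>
            hUopen.measurableSet.inter ((measurableSet_cyl a).prod MeasurableSet.univ)]
          intro a ha b hb hab
          refine Disjoint.mono inter_subset_right inter_subset_right ?_
          rw [Set.disjoint_left]
          rintro ⟨x, y⟩ ⟨hx, -⟩ ⟨hx', -⟩
          exact Set.disjoint_left.1 (hHmd ha hb hab) hx hx'
      _ ≤ 2 ^ n * P U := by
          gcongr
          exact Set.iUnion₂_subset fun a _ => inter_subset_left
      _ ≤ 2 ^ n * 2⁻¹ ^ (2 * n) := by gcongr
      _ = 2⁻¹ ^ n := by rw [two_mul, pow_add, pow_cancel]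
  · -- section bound
    intro α1 hα1 Q hQprob hpos hlim
    have notheavy : ∀ m, P (U ∩ (cyl (pref α1 m) ×ˢ (univ : Set Cantor))) ≤
        2⁻¹ ^ n * P1 (cyl (pref α1 m)) := by
      intro m
      by_contra hc
      push_neg at hc
      obtain ⟨b, hbH, hba, hbmin⟩ := exists_minimal_prefix H _ hc
      exact hα1 (Set.mem_biUnion ⟨hbH, hbmin⟩ (cyl_mono hba (mem_cyl_pref α1 m)))
    set T : Set (List Bool) := {J | ∃ m, cyl (pref α1 m) ×ˢ cyl J ⊆ U} with hT
    -- the key finite estimate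
    have finclaim : ∀ F : Finset (List Bool), (∀ J ∈ F, J ∈ T) →
        Q (⋃ J ∈ F, cyl J) ≤ 2⁻¹ ^ n := by
      intro F hF
      set F' := F.filter (fun J => ∀ J' ∈ F, J' <+: J → J' = J) with hF'
      have hsub : (⋃ J ∈ F, cyl J) ⊆ ⋃ J ∈ F', cyl J := by
        intro β hβ
        rw [Set.mem_iUnion₂] at hβ ⊢
        obtain ⟨J, hJ, hβJ⟩ := hβ
        obtain ⟨b, hb, hba, hbmin⟩ := exists_minimal_prefix {a | a ∈ F} J hJ
        refine ⟨b, ?_, cyl_mono hba hβJ⟩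
        rw [hF', Finset.mem_filter]
        exact ⟨hb, fun c hc hcb => hbmin c hc hcb⟩
      have hF'T : ∀ J ∈ F', J ∈ T := fun J hJ => hF J (Finset.mem_filter.1 hJ).1
      have hdisj : (F' : Set (List Bool)).PairwiseDisjoint cyl := by
        intro a ha b hb hab
        rw [Function.onFun, Set.disjoint_left]
        intro ω hωa hωb
        rcases prefix_or_of_mem hωa hωb with h | h
        · exact hab ((Finset.mem_filter.1 hb).2 a (Finset.mem_filter.1 ha).1 h)
        · exact hab ((Finset.mem_filter.1 ha).2 b (Finset.mem_filter.1 hb).1 h).symm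
      -- choose a common m
      set mf : List Bool → ℕ := fun J =>
        if h : ∃ m, cyl (pref α1 m) ×ˢ cyl J ⊆ U then h.choose else 0 with hmf
      set m0 : ℕ := F'.sup mf with hm0
      have hcontained : ∀ m', m0 ≤ m' →
          cyl (pref α1 m') ×ˢ (⋃ J ∈ F', cyl J) ⊆
            U ∩ (cyl (pref α1 m') ×ˢ (univ : Set Cantor)) := by
        rintro m' hm' ⟨x, y⟩ ⟨hx, hy⟩
        rw [Set.mem_iUnion₂] at hy
        obtain ⟨J, hJ, hyJ⟩ := hy
        have hJT : ∃ m, cyl (pref α1 m) ×ˢ cyl J ⊆ U := hF'T J hJ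
        refine ⟨?_, hx, Set.mem_univ y⟩
        have h1 : mf J ≤ m' := le_trans (Finset.le_sup hJ) hm'
        have h2 : cyl (pref α1 (mf J)) ×ˢ cyl J ⊆ U := by
          rw [hmf]; simp only [hJT, dif_pos]; exact hJT.choose_spec
        exact h2 ⟨cyl_pref_mono α1 h1 hx, hyJ⟩
      -- convergence
      have hQsum : Q (⋃ J ∈ F', cyl J) = ∑ J ∈ F', Q (cyl J) :=
        measure_biUnion_finset hdisj fun J _ => measurableSet_cyl J
      have htend : Tendsto (fun m' : ℕ => ∑ J ∈ F',
          (P (cyl (pref α1 m') ×ˢ cyl J)).toReal / (P1 (cyl (pref α1 m'))).toReal)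
          atTop (𝓝 (∑ J ∈ F', (Q (cyl J)).toReal)) :=
        tendsto_finset_sum _ fun J _ => hlim J
      have hbound : ∀ m', m0 ≤ m' → (∑ J ∈ F',
          (P (cyl (pref α1 m') ×ˢ cyl J)).toReal / (P1 (cyl (pref α1 m'))).toReal)
          ≤ (2⁻¹ : ℝ) ^ n := by
        intro m' hm'
        have hc : (0:ℝ) < (P1 (cyl (pref α1 m'))).toReal :=
          ENNReal.toReal_pos (hpos m').ne' (measure_ne_top _ _)
        rw [← Finset.sum_div, div_le_iff₀ hc]
        have hPsum : ∑ J ∈ F', (P (cyl (pref α1 m') ×ˢ cyl J)).toReal =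
            (P (cyl (pref α1 m') ×ˢ ⋃ J ∈ F', cyl J)).toReal := by
          rw [← ENNReal.toReal_sum fun J _ => measure_ne_top _ _]
          congr 1
          rw [← measure_biUnion_finset ?_ fun J _ =>
            (measurableSet_cyl _).prod (measurableSet_cyl J)]
          · congr 1
            ext ⟨x, y⟩
            simp only [Set.mem_iUnion₂, Set.mem_prod]
            constructor
            · rintro ⟨J, hJ, hx, hy⟩; exact ⟨hx, J, hJ, hy⟩
            · rintro ⟨hx, J, hJ, hy⟩; exact ⟨J, hJ, hx, hy⟩
          · intro a ha b hb hab
            refine Set.disjoint_left.2 ?_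
            rintro ⟨x, y⟩ ⟨-, hy⟩ ⟨-, hy'⟩
            exact Set.disjoint_left.1 (hdisj ha hb hab) hy hy'
        rw [hPsum]
        have h1 : P (cyl (pref α1 m') ×ˢ ⋃ J ∈ F', cyl J) ≤
            2⁻¹ ^ n * P1 (cyl (pref α1 m')) :=
          le_trans (measure_mono (hcontained m' hm')) (notheavy m')
        have h2 := ENNReal.toReal_mono
          (by exact ENNReal.mul_ne_top (by simp) (measure_ne_top _ _)) h1
        rw [ENNReal.toReal_mul] at h2
        have h3 : ((2⁻¹ : ENNReal) ^ n).toReal = (2⁻¹ : ℝ) ^ n := by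
          simp [ENNReal.toReal_pow, ENNReal.toReal_inv]
        rw [h3] at h2
        exact h2
      have hlim2 : (Q (⋃ J ∈ F', cyl J)).toReal ≤ (2⁻¹ : ℝ) ^ n := by
        have : (Q (⋃ J ∈ F', cyl J)).toReal = ∑ J ∈ F', (Q (cyl J)).toReal := by
          rw [hQsum, ENNReal.toReal_sum fun J _ => measure_ne_top _ _]
        rw [this]
        exact le_of_tendsto htend (eventually_atTop.2 ⟨m0, hbound⟩)
      have hfin : Q (⋃ J ∈ F', cyl J) ≤ 2⁻¹ ^ n := by
        rw [← ENNReal.toReal_le_toReal (measure_ne_top _ _) (by simp)]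
        have h3 : ((2⁻¹ : ENNReal) ^ n).toReal = (2⁻¹ : ℝ) ^ n := by
          simp [ENNReal.toReal_pow, ENNReal.toReal_inv]
        rw [h3]
        exact hlim2
      exact le_trans (measure_mono hsub) hfin
    -- countable exhaustion of the section
    have hWUnion : {β : Cantor | (α1, β) ∈ U} = ⋃ J ∈ T, cyl J := by
      ext β
      simp only [Set.mem_iUnion₂, Set.mem_setOf_eq, hT]
      constructor
      · intro hβ
        have hU : U ∈ 𝓝 (α1, β) := hUopen.mem_nhds hβ
        rw [mem_nhds_prod_iff] at hU
        obtain ⟨A, hA, B, hB, hABsub⟩ := hU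
        obtain ⟨m, hm⟩ := exists_nhds_cyl hA
        obtain ⟨k, hk⟩ := exists_nhds_cyl hB
        exact ⟨pref β k, ⟨m, fun p hp => hABsub ⟨hm hp.1, hk hp.2⟩⟩, mem_cyl_pref β k⟩
      · rintro ⟨J, ⟨m, hm⟩, hβ⟩
        exact hm ⟨mem_cyl_pref α1 m, hβ⟩
    set d : ℕ → List Bool := fun i => ((Encodable.decode (α := List Bool) i)).getD [] with hd
    set s : ℕ → Set Cantor := fun i => if d i ∈ T ∧ (Encodable.decode (α := List Bool) i).isSome
      then cyl (d i) else ∅ with hs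
    have hWs : {β : Cantor | (α1, β) ∈ U} = ⋃ i, s i := by
      rw [hWUnion]
      ext β
      simp only [Set.mem_iUnion₂, Set.mem_iUnion]
      constructor
      · rintro ⟨J, hJ, hβ⟩
        refine ⟨Encodable.encode J, ?_⟩
        have hdec : Encodable.decode (α := List Bool) (Encodable.encode J) = some J :=
          Encodable.encodek J
        have hdJ : d (Encodable.encode J) = J := by rw [hd]; simp [hdec]
        rw [hs]
        simp only [hdJ, hdec, Option.isSome_some, and_true, hJ, if_true]
        exact hβ
      · rintro ⟨i, hβ⟩
        simp only [hs] at hβ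
        split_ifs at hβ with h
        · exact ⟨d i, h.1, hβ⟩
        · exact absurd hβ (Set.notMem_empty β)
    rw [hWs, ← Set.iUnion_accumulate]
    rw [Directed.measure_iUnion (Set.monotone_accumulate.directed_le)]
    refine iSup_le fun k => ?_
    have hsubk : accumulate s k ⊆
        ⋃ J ∈ ((Finset.range (k + 1)).image d).filter (· ∈ T), cyl J := by
      intro β hβ
      rw [Set.accumulate_def, Set.mem_iUnion₂] at hβ
      obtain ⟨i, hik, hβi⟩ := hβ
      simp only [hs] at hβi
      split_ifs at hβi with h
      · rw [Set.mem_iUnion₂]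
        refine ⟨d i, ?_, hβi⟩
        rw [Finset.mem_filter, Finset.mem_image]
        exact ⟨⟨i, Finset.mem_range.2 (Nat.lt_succ_of_le hik), rfl⟩, h.1⟩
      · exact absurd hβi (Set.notMem_empty β)
    refine le_trans (measure_mono hsubk) (finclaim _ fun J hJ => (Finset.mem_filter.1 hJ).2)
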